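/- arXiv:1009.3547 — 3 statements merged into one kernel-verified Lean document; each statement's English description precedes it below -/
import Mathlib

section
/- Let w_1,…,w_d ∈ ℝ^n and let μ : ℂ^d → ℝ^n be given by μ(z) = π Σ_{α=1}^d |z_α|² w_α. Then μ is a proper map (the preimage of every compact subset of ℝ^n is compact) if and only if there exists s ∈ ℝ^d with s_α ≥ 0 for all α such that the set { t ∈ ℝ^d : t_α ≥ 0 for all α, and Σ_{α=1}^d t_α w_α = Σ_{α=1}^d s_α w_α } is compact. -/
/-!
Write `μ z = π • ρ* (|z_α|²)_α`. The map `z ↦ (|z_α|²)_α` is continuous and maps `ℂ^d` onto the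
nonnegative orthant, so if `μ` is proper then the compact set `μ⁻¹ 0` maps onto the fiber polytope
over `0`, which is therefore compact. Conversely, a bounded nonempty fiber polytope contains no
ray `s + ℝ≥0 • u`, so `ρ*` vanishes at no nonzero point of the orthant. Compactness of the unit
sphere then gives `ε > 0` with `ε ‖t‖ ≤ ‖ρ* t‖` on the orthant, hence `π ε ‖z‖² ≤ ‖μ z‖`, and a
continuous map growing at infinity is proper.
-/

open Filter Bornology Metric

theorem eq_zero_of_forall_add_smul_mem_of_isBounded {V : Type*} [NormedAddCommGroup V]
    [NormedSpace ℝ V] {K : Set V} (hK : IsBounded K) {s u : V}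
    (h : ∀ r : ℝ, 0 ≤ r → s + r • u ∈ K) : u = 0 := by
  obtain ⟨R, hR⟩ := hK.subset_closedBall s
  by_contra hu
  have hu' : 0 < ‖u‖ := norm_pos_iff.mpr hu
  have hR0 : 0 ≤ R := by simpa using hR (h 0 le_rfl)
  have hmem := hR (h ((R + 1) / ‖u‖) (by positivity))
  rw [mem_closedBall, dist_self_add_left, norm_smul, Real.norm_of_nonneg (by positivity),
    div_mul_cancel₀ _ hu'.ne'] at hmem
  linarith

theorem LinearMap.exists_pos_mul_norm_le_norm_of_cone {E F : Type*} [NormedAddCommGroup E]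
    [NormedSpace ℝ E] [FiniteDimensional ℝ E] [NormedAddCommGroup F] [NormedSpace ℝ F]
    (L : E →ₗ[ℝ] F) {C : Set E} (hC : IsClosed C) (hsmul : ∀ c : ℝ, 0 < c → ∀ x ∈ C, c • x ∈ C)
    (hker : ∀ x ∈ C, L x = 0 → x = 0) : ∃ ε > 0, ∀ x ∈ C, ε * ‖x‖ ≤ ‖L x‖ := by
  have hpos : ∀ x ∈ C ∩ sphere 0 1, 0 < ‖L x‖ := by
    rintro x ⟨hxC, hx1⟩
    refine norm_pos_iff.mpr fun hLx => ?_
    simp [hker x hxC hLx] at hx1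
  obtain ⟨ε, hε, hεle⟩ := ((isCompact_sphere 0 1).inter_left hC).exists_forall_le'
    (L.continuous_of_finiteDimensional.norm.continuousOn) hpos
  refine ⟨ε, hε, fun x hx => ?_⟩
  rcases eq_or_ne x 0 with rfl | hx0
  · simp
  have hxn : 0 < ‖x‖ := norm_pos_iff.mpr hx0
  have hunit : ‖x‖⁻¹ • x ∈ C ∩ sphere 0 1 :=
    ⟨hsmul _ (inv_pos.mpr hxn) x hx, by simp [norm_smul, hxn.ne']⟩
  have := hεle _ hunit
  rwa [map_smul, norm_smul, norm_inv, norm_norm, le_inv_mul_iff₀ hxn, mul_comm] at this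

section sqNorms

variable {ι : Type*}

noncomputable def sqNorms (z : ι → ℂ) : ι → ℝ := fun α => ‖z α‖ ^ 2

theorem continuous_sqNorms : Continuous (sqNorms (ι := ι)) :=
  continuous_pi fun α => (continuous_apply α).norm.pow 2

theorem range_sqNorms : Set.range (sqNorms (ι := ι)) = Set.Ici 0 := by
  refine Set.Subset.antisymm (Set.range_subset_iff.mpr fun z α => sq_nonneg _) fun t ht => ?_
  refine ⟨fun α => (Real.sqrt (t α) : ℂ), funext fun α => ?_⟩
  simp [sqNorms, Real.sq_sqrt (ht α)]

theorem sq_norm_le_norm_sqNorms [Fintype ι] (z : ι → ℂ) : ‖z‖ ^ 2 ≤ ‖sqNorms z‖ := by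
  rw [← Real.le_sqrt (norm_nonneg _) (norm_nonneg _)]
  refine (pi_norm_le_iff_of_nonneg (Real.sqrt_nonneg _)).mpr fun α => ?_
  rw [Real.le_sqrt (norm_nonneg _) (norm_nonneg _)]
  exact (le_abs_self _).trans (norm_le_pi_norm (sqNorms z) α)

end sqNorms

section MomentMap

variable {ι E : Type*} [Fintype ι] [NormedAddCommGroup E] [NormedSpace ℝ E]

def fiberPolytope (w : ι → E) (x : E) : Set (ι → ℝ) :=
  Set.Ici 0 ∩ Fintype.linearCombination ℝ w ⁻¹' {x}

noncomputable def momentMap (w : ι → E) (z : ι → ℂ) : E :=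
  Real.pi • Fintype.linearCombination ℝ w (sqNorms z)

theorem continuous_momentMap (w : ι → E) : Continuous (momentMap w) :=
  ((Fintype.linearCombination ℝ w).continuous_of_finiteDimensional.comp
    continuous_sqNorms).const_smul _

theorem image_sqNorms_momentMap_preimage_zero (w : ι → E) :
    sqNorms '' (momentMap w ⁻¹' {0}) = fiberPolytope w 0 := by
  have : momentMap w ⁻¹' {0} = sqNorms ⁻¹' (Fintype.linearCombination ℝ w ⁻¹' {0}) := by
    ext z
    simp [momentMap, Real.pi_ne_zero]
  rw [this, Set.image_preimage_eq_range_inter, range_sqNorms]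
  rfl

theorem eq_zero_of_isBounded_fiberPolytope {w : ι → E} {x : E}
    (hb : IsBounded (fiberPolytope w x)) (hne : (fiberPolytope w x).Nonempty) {u : ι → ℝ}
    (hu : 0 ≤ u) (hwu : Fintype.linearCombination ℝ w u = 0) : u = 0 := by
  obtain ⟨s, hs⟩ := hne
  refine eq_zero_of_forall_add_smul_mem_of_isBounded hb (s := s) fun r hr => ⟨?_, ?_⟩
  · exact add_nonneg hs.1 (smul_nonneg hr hu)
  · simpa [hwu] using hs.2

theorem exists_pos_mul_norm_le_norm_linearCombination {w : ι → E} {x : E}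
    (hb : IsBounded (fiberPolytope w x)) (hne : (fiberPolytope w x).Nonempty) :
    ∃ ε > 0, ∀ t : ι → ℝ, 0 ≤ t → ε * ‖t‖ ≤ ‖Fintype.linearCombination ℝ w t‖ :=
  (Fintype.linearCombination ℝ w).exists_pos_mul_norm_le_norm_of_cone isClosed_Ici
    (fun _ hc _ ht => Set.mem_Ici.mpr (smul_nonneg hc.le ht))
    (fun _ hu => eq_zero_of_isBounded_fiberPolytope hb hne hu)

theorem tendsto_momentMap_cocompact {w : ι → E} {x : E}
    (hb : IsBounded (fiberPolytope w x)) (hne : (fiberPolytope w x).Nonempty) :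
    Tendsto (momentMap w) (cocompact _) (cocompact E) := by
  obtain ⟨ε, hε, hρ⟩ := exists_pos_mul_norm_le_norm_linearCombination hb hne
  have hbound : ∀ z, Real.pi * ε * ‖z‖ ^ 2 ≤ ‖momentMap w z‖ := fun z => by
    rw [momentMap, norm_smul, Real.norm_of_nonneg Real.pi_pos.le, mul_assoc]
    gcongr
    exact (mul_le_mul_of_nonneg_left (sq_norm_le_norm_sqNorms z) hε.le).trans
      (hρ _ fun α => sq_nonneg _)
  rw [← cobounded_eq_cocompact]
  refine .mono_right ?_ cobounded_le_cocompact
  rw [← tendsto_norm_atTop_iff_cobounded]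
  exact tendsto_atTop_mono hbound
    ((tendsto_pow_atTop two_ne_zero).comp tendsto_norm_cobounded_atTop |>.const_mul_atTop
      (by positivity))

theorem isProperMap_momentMap {w : ι → E} {x : E}
    (hb : IsBounded (fiberPolytope w x)) (hne : (fiberPolytope w x).Nonempty) :
    IsProperMap (momentMap w) :=
  isProperMap_iff_tendsto_cocompact.mpr
    ⟨continuous_momentMap w, tendsto_momentMap_cocompact hb hne⟩

end MomentMap

/-- Guillemin–Ginzburg–Karshon: the moment map
μ(z) = π Σ_α |z_α|² w_α is proper iff there is s with s_α ≥ 0 such that the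
fiber polytope { t : t_α ≥ 0, Σ t_α w_α = Σ s_α w_α } is compact. -/
theorem moment_map_proper_iff (d n : ℕ)
    (w : Fin d → EuclideanSpace ℝ (Fin n))
    (μ : (Fin d → ℂ) → EuclideanSpace ℝ (Fin n))
    (hμ : ∀ z, μ z = Real.pi • ∑ α, ‖z α‖ ^ 2 • w α) :
    (∀ K : Set (EuclideanSpace ℝ (Fin n)), IsCompact K → IsCompact (μ ⁻¹' K)) ↔
      ∃ s : Fin d → ℝ, (∀ α, 0 ≤ s α) ∧
        IsCompact {t : Fin d → ℝ | (∀ α, 0 ≤ t α) ∧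
          ∑ α, t α • w α = ∑ α, s α • w α} := by
  obtain rfl : μ = momentMap w := funext hμ
  constructor
  · intro hproper
    refine ⟨0, fun _ => le_rfl, ?_⟩
    change IsCompact (fiberPolytope w (Fintype.linearCombination ℝ w 0))
    rw [map_zero, ← image_sqNorms_momentMap_preimage_zero]
    exact (hproper {0} isCompact_singleton).image continuous_sqNorms
  · rintro ⟨s, hs, hfiber⟩ K hK
    exact (isProperMap_momentMap hfiber.isBounded ⟨s, hs, rfl⟩).isCompact_preimage hK
end

section
/- Let w_1,…,w_d ∈ ℝ^n, τ ∈ ℝ^n, ξ ∈ ℝ^n, and z ∈ ℂ^d. Suppose that π Σ_{α=1}^d |z_α|² w_α = τ and π Σ_{α=1}^d exp(4π⟨w_α, ξ⟩) |z_α|² w_α = τ, and suppose that for every ξ' ∈ ℝ^n, if ⟨w_α, ξ'⟩ = 0 for every α with z_α ≠ 0, then ξ' = 0. Then ξ = 0. -/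
/-!
Pair the difference of the two level-set equations with `ξ`: with `s_α = ⟨w_α, ξ⟩` this gives
`∑ α, |z_α|² (exp (4π s_α) - 1) s_α = 0`. Every term is nonnegative because `exp t - 1` has the
sign of `t`, so every term vanishes, i.e. `s_α = 0` whenever `z_α ≠ 0`; local freeness then
forces `ξ = 0`.
-/

open Real

theorem Real.exp_sub_one_mul_self_nonneg (t : ℝ) : 0 ≤ (exp t - 1) * t := by
  rcases le_total 0 t with ht | ht
  · exact mul_nonneg (sub_nonneg.mpr (one_le_exp ht)) ht
  · exact mul_nonneg_of_nonpos_of_nonpos (sub_nonpos.mpr (exp_le_one_iff.mpr ht)) ht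

theorem Real.exp_sub_one_mul_self_eq_zero_iff {t : ℝ} : (exp t - 1) * t = 0 ↔ t = 0 := by
  rw [mul_eq_zero, sub_eq_zero, exp_eq_one_iff, or_self]

theorem inner_eq_zero_of_sum_exp_inner_smul_eq {ι E : Type*} [Fintype ι]
    [NormedAddCommGroup E] [InnerProductSpace ℝ E] (w : ι → E) {c : ι → ℝ}
    (hc : ∀ α, 0 ≤ c α) {ξ : E}
    (h : ∑ α, (exp (inner ℝ (w α) ξ) * c α) • w α = ∑ α, c α • w α)
    {α : ι} (hα : c α ≠ 0) : inner ℝ (w α) ξ = 0 := by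
  set s : ι → ℝ := fun β => inner ℝ (w β) ξ
  have hpair : ∑ β, c β * ((exp (s β) - 1) * s β) = 0 := by
    have := congrArg (fun v => inner ℝ v ξ) (sub_eq_zero.mpr h)
    simp only [← Finset.sum_sub_distrib, ← sub_smul, sum_inner, real_inner_smul_left,
      inner_zero_left] at this
    rw [← this]
    exact Finset.sum_congr rfl fun β _ => by ring
  have hterms := (Finset.sum_eq_zero_iff_of_nonneg fun β _ =>
    mul_nonneg (hc β) (exp_sub_one_mul_self_nonneg (s β))).mp hpair α (Finset.mem_univ α)
  exact exp_sub_one_mul_self_eq_zero_iff.mp ((mul_eq_zero.mp hterms).resolve_left hα)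

/-- if both z and exp(iξ)·z lie in the level set μ⁻¹(τ) of the
moment map μ(z) = π Σ_α |z_α|² w_α, and the torus action is (infinitesimally)
locally free at z, then ξ = 0. -/
theorem stabilizer_in_compact_torus (d n : ℕ)
    (w : Fin d → EuclideanSpace ℝ (Fin n))
    (τ ξ : EuclideanSpace ℝ (Fin n)) (z : Fin d → ℂ)
    (h1 : Real.pi • ∑ α, ‖z α‖ ^ 2 • w α = τ)
    (h2 : Real.pi •
        ∑ α, (Real.exp (4 * Real.pi * (inner ℝ (w α) ξ : ℝ)) * ‖z α‖ ^ 2) • w α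
      = τ)
    (hfree : ∀ ξ' : EuclideanSpace ℝ (Fin n),
      (∀ α, z α ≠ 0 → (inner ℝ (w α) ξ' : ℝ) = 0) → ξ' = 0) :
    ξ = 0 := by
  have hsum : ∑ α, (exp (inner ℝ (w α) ((4 * π) • ξ)) * ‖z α‖ ^ 2) • w α
      = ∑ α, ‖z α‖ ^ 2 • w α := by
    simpa only [real_inner_smul_right] using smul_right_injective _ pi_ne_zero (h2.trans h1.symm)
  refine hfree ξ fun α hzα => ?_
  have hscaled := inner_eq_zero_of_sum_exp_inner_smul_eq w (fun β => sq_nonneg ‖z β‖) hsum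
    (pow_ne_zero 2 (norm_ne_zero_iff.mpr hzα))
  rw [real_inner_smul_right] at hscaled
  exact (mul_eq_zero.mp hscaled).resolve_left (by positivity)
end

section
/- Let w_1,…,w_d ∈ ℝ^n, let τ ∈ ℝ^n, and let μ : ℂ^d → ℝ^n be given by μ(z) = π Σ_{α=1}^d |z_α|² w_α. Assume that for every z ∈ μ⁻¹(τ) and every ξ ∈ ℝ^n, if ⟨w_α, ξ⟩ = 0 for all α with z_α ≠ 0, then ξ = 0. Then the map φ : ℝ^n × μ⁻¹(τ) → ℂ^d defined by φ(ξ, z) = (e^{2π⟨w_α,ξ⟩} z_α)_{α=1,…,d} is injective. -/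
/-!
Write `ξ = ξ₁ - ξ₂` and `t_α = 4π⟨w_α, ξ⟩`. Equality of the images gives `z₂ = exp(2π⟨w_α, ξ⟩) z₁`,
so `|z₂_α|² = e^{t_α} |z₁_α|²`, and pairing `μ z₂ - μ z₁ = 0` with `4πξ` yields
`Σ_α |z₁_α|² t_α (e^{t_α} - 1) = 0`. Every term is nonnegative because `exp` is increasing, and
vanishes only when `t_α = 0`; hence `⟨w_α, ξ⟩ = 0` wherever `z₁_α ≠ 0`, and local freeness gives `ξ = 0`.
-/

open Real

lemma mul_exp_sub_one_nonneg (t : ℝ) : 0 ≤ t * (exp t - 1) := by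
  rcases le_total 0 t with ht | ht
  · exact mul_nonneg ht (sub_nonneg.mpr (one_le_exp ht))
  · exact mul_nonneg_of_nonpos_of_nonpos ht (sub_nonpos.mpr (exp_le_one_iff.mpr ht))

lemma mul_exp_sub_one_eq_zero_iff {t : ℝ} : t * (exp t - 1) = 0 ↔ t = 0 := by
  simp [sub_eq_zero]

lemma eq_zero_of_sum_mul_mul_exp_sub_one_eq_zero {ι : Type*} {s : Finset ι} {a t : ι → ℝ}
    (ha : ∀ i ∈ s, 0 ≤ a i) (h : ∑ i ∈ s, a i * (t i * (exp (t i) - 1)) = 0)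
    {i : ι} (hi : i ∈ s) (hai : a i ≠ 0) : t i = 0 := by
  have hterm := (Finset.sum_eq_zero_iff_of_nonneg fun j hj =>
    mul_nonneg (ha j hj) (mul_exp_sub_one_nonneg (t j))).mp h i hi
  exact mul_exp_sub_one_eq_zero_iff.mp ((mul_eq_zero.mp hterm).resolve_left hai)

lemma eq_exp_sub_mul_of_exp_mul_eq {a b : ℝ} {u v : ℂ} (h : (exp a : ℂ) * u = exp b * v) :
    v = exp (a - b) * u := by
  rw [exp_sub, Complex.ofReal_div, div_mul_eq_mul_div, eq_div_iff (by exact_mod_cast exp_ne_zero b),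
    h, mul_comm]

lemma norm_exp_mul_sq (x : ℝ) (u : ℂ) : ‖(exp x : ℂ) * u‖ ^ 2 = exp (2 * x) * ‖u‖ ^ 2 := by
  rw [norm_mul, mul_pow, Complex.norm_real, norm_of_nonneg (exp_pos x).le, ← exp_nat_mul]
  norm_num

theorem inner_eq_zero_of_sum_norm_exp_mul_sq_smul_eq {ι E : Type*} [Fintype ι]
    [NormedAddCommGroup E] [InnerProductSpace ℝ E] (w : ι → E) (z : ι → ℂ) (ξ : E)
    (h : ∑ α, ‖(exp (2 * π * inner ℝ (w α) ξ) : ℂ) * z α‖ ^ 2 • w α = ∑ α, ‖z α‖ ^ 2 • w α)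
    {α : ι} (hα : z α ≠ 0) : inner ℝ (w α) ξ = 0 := by
  have hsum : ∑ β, ‖z β‖ ^ 2 * (4 * π * inner ℝ (w β) ξ * (exp (4 * π * inner ℝ (w β) ξ) - 1))
      = 0 := by
    have hpair := congrArg (fun v => inner ℝ v ((4 * π) • ξ)) h
    simp only [sum_inner, real_inner_smul_left, norm_exp_mul_sq, real_inner_smul_right] at hpair
    rw [← sub_eq_zero, ← Finset.sum_sub_distrib] at hpair
    rw [← hpair]
    refine Finset.sum_congr rfl fun β _ => ?_
    ring_nf
  have h4π := eq_zero_of_sum_mul_mul_exp_sub_one_eq_zero (fun β _ => sq_nonneg ‖z β‖) hsum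
    (Finset.mem_univ α) (pow_ne_zero 2 (norm_ne_zero_iff.mpr hα))
  simpa [pi_ne_zero] using h4π

/-- if the torus action is (infinitesimally) locally free on the
level set μ⁻¹(τ) of μ(z) = π Σ_α |z_α|² w_α, then the map
φ(ξ,z) = (e^{2π⟨w_α,ξ⟩} z_α)_α on ℝ^n × μ⁻¹(τ) is injective. -/
theorem imaginary_action_injective (d n : ℕ)
    (w : Fin d → EuclideanSpace ℝ (Fin n)) (τ : EuclideanSpace ℝ (Fin n))
    (μ : (Fin d → ℂ) → EuclideanSpace ℝ (Fin n))
    (hμ : ∀ z, μ z = Real.pi • ∑ α, ‖z α‖ ^ 2 • w α)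
    (hfree : ∀ z, μ z = τ → ∀ ξ : EuclideanSpace ℝ (Fin n),
      (∀ α, z α ≠ 0 → (inner ℝ (w α) ξ : ℝ) = 0) → ξ = 0) :
    ∀ (ξ₁ ξ₂ : EuclideanSpace ℝ (Fin n)) (z₁ z₂ : Fin d → ℂ),
      μ z₁ = τ → μ z₂ = τ →
      (fun α => (Real.exp (2 * Real.pi * (inner ℝ (w α) ξ₁ : ℝ)) : ℂ) * z₁ α) =
        (fun α => (Real.exp (2 * Real.pi * (inner ℝ (w α) ξ₂ : ℝ)) : ℂ) * z₂ α) →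
      ξ₁ = ξ₂ ∧ z₁ = z₂ := by
  intro ξ₁ ξ₂ z₁ z₂ h₁ h₂ heq
  have hz₂ : ∀ α, z₂ α = (exp (2 * π * inner ℝ (w α) (ξ₁ - ξ₂)) : ℂ) * z₁ α := fun α => by
    rw [inner_sub_right, mul_sub]
    exact eq_exp_sub_mul_of_exp_mul_eq (congrFun heq α)
  have hsum : ∑ α, ‖z₂ α‖ ^ 2 • w α = ∑ α, ‖z₁ α‖ ^ 2 • w α :=
    smul_right_injective _ pi_ne_zero ((hμ z₂).symm.trans (h₂.trans (h₁.symm.trans (hμ z₁))))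
  simp only [hz₂] at hsum
  have hξ : ξ₁ - ξ₂ = 0 :=
    hfree z₁ h₁ _ fun α hα => inner_eq_zero_of_sum_norm_exp_mul_sq_smul_eq w z₁ _ hsum hα
  refine ⟨sub_eq_zero.mp hξ, funext fun α => ?_⟩
  simp [hz₂, hξ]
end
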